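/- The five tiles states T = { |0⟩|0−1⟩, |2⟩|1−2⟩, |1−2⟩|0⟩, |0−1⟩|2⟩, |0+1+2⟩|0+1+2⟩ } (all normalized, |i±j⟩ := (|i⟩±|j⟩)/√2, |0+1+2⟩ := (|0⟩+|1⟩+|2⟩)/√3) form an unextendible product basis in C³⊗C³: there is no nonzero product vector |a⟩⊗|b⟩ ∈ C³⊗C³ orthogonal to all five states. -/

import Mathlib

open scoped InnerProductSpace ComplexOrder

noncomputable section

/-- Tensor product of two vectors in the composite Euclidean (Hilbert) space. -/
def tmul {m n : ℕ} (a : Fin m → ℂ) (b : Fin n → ℂ) :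
    EuclideanSpace ℂ (Fin m × Fin n) := WithLp.toLp 2 (fun p : Fin m × Fin n => a p.1 * b p.2)

/-- Standard basis ket of C³. -/
def ket (i : Fin 3) : Fin 3 → ℂ := fun k => if k = i then 1 else 0

/-- `(|i⟩ − |j⟩)/√2` in C³. -/
def minusK (i j : Fin 3) : Fin 3 → ℂ := (Real.sqrt 2 : ℂ)⁻¹ • (ket i - ket j)

/-- `(|0⟩ + |1⟩ + |2⟩)/√3`. -/
def sumK : Fin 3 → ℂ := (Real.sqrt 3 : ℂ)⁻¹ • (ket 0 + ket 1 + ket 2)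

/-- Alice's local parts of the five tiles states. -/
def TilesA : Fin 5 → Fin 3 → ℂ := ![ket 0, ket 2, minusK 1 2, minusK 0 1, sumK]

/-- Bob's local parts of the five tiles states. -/
def TilesB : Fin 5 → Fin 3 → ℂ := ![minusK 0 1, minusK 1 2, ket 0, ket 2, sumK]

/-- The five tiles product states in C³ ⊗ C³. -/
def Tiles : Fin 5 → EuclideanSpace ℂ (Fin 3 × Fin 3) := fun i => tmul (TilesA i) (TilesB i)

private lemma three_eq_zero {x : ℂ} (h : x + x + x = 0) : x = 0 := by
  have : (3 : ℂ) * x = 0 := by linear_combination h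
  simpa using this

set_option maxHeartbeats 2000000 in
/-- Unextendibility of the tiles basis: no nonzero product vector in C³ ⊗ C³ is
orthogonal to all five tiles states. -/
theorem stmt10 :
    ∀ a b : Fin 3 → ℂ, (∀ i : Fin 5, ⟪Tiles i, tmul a b⟫_ℂ = 0) → tmul a b = 0 := by
  intro a b h
  have s2 : ((Real.sqrt 2 : ℝ) : ℂ) ≠ 0 := Complex.ofReal_ne_zero.mpr (by positivity)
  have s3 : ((Real.sqrt 3 : ℝ) : ℂ) ≠ 0 := Complex.ofReal_ne_zero.mpr (by positivity)
  have h0 := h 0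
  have h1 := h 1
  have h2 := h 2
  have h3 := h 3
  have h4 := h 4
  simp [Tiles, tmul, TilesA, TilesB, ket, minusK, sumK, PiLp.inner_apply,
    Fintype.sum_prod_type, Fin.sum_univ_succ, map_inv₀, Complex.conj_ofReal] at h0 h1 h2 h3 h4
  field_simp [s2, s3] at h0 h1 h2 h3 h4
  have E1 : a 0 = 0 ∨ b 0 = b 1 := by
    rcases mul_eq_zero.mp (show a 0 * (b 0 - b 1) = 0 by linear_combination h0) with hh | hh
    · exact Or.inl hh
    · exact Or.inr (sub_eq_zero.mp hh)
  have E2 : a 2 = 0 ∨ b 1 = b 2 := by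
    rcases mul_eq_zero.mp (show a 2 * (b 1 - b 2) = 0 by linear_combination h1) with hh | hh
    · exact Or.inl hh
    · exact Or.inr (sub_eq_zero.mp hh)
  have E3 : a 1 = a 2 ∨ b 0 = 0 := by
    rcases mul_eq_zero.mp (show (a 1 - a 2) * b 0 = 0 by linear_combination h2) with hh | hh
    · exact Or.inl (sub_eq_zero.mp hh)
    · exact Or.inr hh
  have E4 : a 0 = a 1 ∨ b 2 = 0 := by
    rcases mul_eq_zero.mp (show (a 0 - a 1) * b 2 = 0 by linear_combination h3) with hh | hh
    · exact Or.inl (sub_eq_zero.mp hh)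
    · exact Or.inr hh
  have E5 : a 0 + a 1 + a 2 = 0 ∨ b 0 + b 1 + b 2 = 0 := by
    exact mul_eq_zero.mp (show (a 0 + a 1 + a 2) * (b 0 + b 1 + b 2) = 0 by linear_combination h4)
  have key : a = 0 ∨ b = 0 := by
    rcases E1 with e1 | e1 <;> rcases E2 with e2 | e2 <;> rcases E3 with e3 | e3 <;>
      rcases E4 with e4 | e4 <;> rcases E5 with e5 | e5 <;>
      [skip;skip;skip;skip;skip;skip;skip;skip;skip;skip;skip;skip;skip;skip;skip;skip;
       skip;skip;skip;skip;skip;skip;skip;skip;skip;skip;skip;skip;skip;skip;skip;skip] <;>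
    first
      | (left; funext k; fin_cases k <;>
          first | (simp_all; done) | (exact three_eq_zero (by linear_combination e5)) | (exact three_eq_zero (by linear_combination e5 + e1 + e2)))
      | (right; funext k; fin_cases k <;>
          first | (simp_all; done) | (exact three_eq_zero (by linear_combination e5)) | (exact three_eq_zero (by linear_combination e5 + e1 + e2)))
      | skip
    case inr.inl.inr.inl.inl =>
      left; funext k; fin_cases k
      · show a 0 = 0; linear_combination (e5 + e4 - e2) / 2
      · show a 1 = 0; linear_combination (e5 - e4 - e2) / 2
      · show a 2 = 0; exact e2
    case inr.inl.inr.inl.inr =>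
      right; funext k; fin_cases k
      · show b 0 = 0; exact e3
      · show b 1 = 0; linear_combination e3 - e1
      · show b 2 = 0; linear_combination e5 + e1 - 2 * e3
    case inr.inr.inl.inl.inl =>
      left; funext k; fin_cases k
      · show a 0 = 0; linear_combination (e5 + 2 * e4 + e3) / 3
      · show a 1 = 0; linear_combination (e5 - e4 + e3) / 3
      · show a 2 = 0; linear_combination (e5 - e4 - 2 * e3) / 3
    case inr.inr.inl.inl.inr =>
      right; funext k; fin_cases k
      · show b 0 = 0; linear_combination (e5 + 2 * e1 + e2) / 3
      · show b 1 = 0; linear_combination (e5 - e1 + e2) / 3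
      · show b 2 = 0; linear_combination (e5 - e1 - 2 * e2) / 3
  rcases key with hk | hk <;> · ext p; simp [tmul, hk]


end
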